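/- arXiv:1608.02990 — 4 statements merged into one kernel-verified Lean document; each statement's English description precedes it below -/
import Mathlib

section
/- If the pleiotropy vector β ∈ ℝ^J is known (fixed), then the map from the remaining structural parameters (ω_X, α, τ_X, ω_Y, τ_Y, λ, θ) to the identified quantities is injective on the domain where τ_X, τ_Y > 0 and |λ| < τ_X τ_Y. -/
theorem eq_of_sub_mul_div_eq {ι K : Type*} [Field K] {α β : ι → K} {t x y : K}
    (hα : α ≠ 0) (ht : t ≠ 0)
    (h : (fun i => β i - α i * x / t) = fun i => β i - α i * y / t) : x = y := by
  obtain ⟨i, hi⟩ := Function.ne_iff.mp hα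
  have hi_eq : α i * x / t = α i * y / t := sub_right_injective (congrFun h i)
  exact mul_right_injective₀ hi ((div_left_inj' ht).mp hi_eq)

theorem stmt_6_general (J : ℕ) (β : Fin J → ℝ)
    (ωX₁ : ℝ) (α₁ : Fin J → ℝ) (τX₁ τY₁ ωY₁ lam₁ θ₁ : ℝ)
    (ωX₂ : ℝ) (α₂ : Fin J → ℝ) (τX₂ τY₂ ωY₂ lam₂ θ₂ : ℝ)
    (hτX₁ : 0 < τX₁) (hτY₁ : 0 < τY₁)
    (hτY₂ : 0 < τY₂)
    (hα : α₁ ≠ 0)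
    (himg :
      (ωX₁, α₁, τX₁, ωY₁ - ωX₁ * lam₁ / τX₁ ^ 2, θ₁ + lam₁ / τX₁ ^ 2,
        (fun i => β i - α₁ i * lam₁ / τX₁ ^ 2), τY₁ ^ 2 - lam₁ ^ 2 / τX₁ ^ 2)
      = (ωX₂, α₂, τX₂, ωY₂ - ωX₂ * lam₂ / τX₂ ^ 2, θ₂ + lam₂ / τX₂ ^ 2,
        (fun i => β i - α₂ i * lam₂ / τX₂ ^ 2), τY₂ ^ 2 - lam₂ ^ 2 / τX₂ ^ 2)) :
    (ωX₁, α₁, τX₁, ωY₁, τY₁, lam₁, θ₁) = (ωX₂, α₂, τX₂, ωY₂, τY₂, lam₂, θ₂) := by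
  simp only [Prod.mk.injEq] at himg ⊢
  obtain ⟨rfl, rfl, rfl, hωY, hθ, hβ, hv⟩ := himg
  obtain rfl : lam₁ = lam₂ := eq_of_sub_mul_div_eq hα (by positivity) hβ
  have hτY : τY₁ = τY₂ := (pow_left_inj₀ hτY₁.le hτY₂.le two_ne_zero).mp (sub_left_injective hv)
  exact ⟨rfl, rfl, rfl, sub_left_injective hωY, hτY, rfl, add_left_injective _ hθ⟩

/-- If the pleiotropy vector `β` is known (fixed), the map from the remaining structural
parameters `(ω_X, α, τ_X, ω_Y, τ_Y, λ, θ)` to the identified quantities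
`(ω_X, α, τ_X, ω_Y′, θ′, β′, v)` — with `ω_Y′ = ω_Y − ω_X λ/τ_X²`, `θ′ = θ + λ/τ_X²`,
`β′ = β − α λ/τ_X²`, `v = τ_Y² − λ²/τ_X²` — is injective on the domain where
`τ_X, τ_Y > 0`, `|λ| < τ_X τ_Y` and `α ≠ 0`. -/
theorem stmt_6 (J : ℕ) (β : Fin J → ℝ)
    (ωX₁ : ℝ) (α₁ : Fin J → ℝ) (τX₁ τY₁ ωY₁ lam₁ θ₁ : ℝ)
    (ωX₂ : ℝ) (α₂ : Fin J → ℝ) (τX₂ τY₂ ωY₂ lam₂ θ₂ : ℝ)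
    (hτX₁ : 0 < τX₁) (hτY₁ : 0 < τY₁) (hlam₁ : |lam₁| < τX₁ * τY₁)
    (hτX₂ : 0 < τX₂) (hτY₂ : 0 < τY₂) (hlam₂ : |lam₂| < τX₂ * τY₂)
    (hα : α₁ ≠ 0)
    (himg :
      (ωX₁, α₁, τX₁, ωY₁ - ωX₁ * lam₁ / τX₁ ^ 2, θ₁ + lam₁ / τX₁ ^ 2,
        (fun i => β i - α₁ i * lam₁ / τX₁ ^ 2), τY₁ ^ 2 - lam₁ ^ 2 / τX₁ ^ 2)
      = (ωX₂, α₂, τX₂, ωY₂ - ωX₂ * lam₂ / τX₂ ^ 2, θ₂ + lam₂ / τX₂ ^ 2,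
        (fun i => β i - α₂ i * lam₂ / τX₂ ^ 2), τY₂ ^ 2 - lam₂ ^ 2 / τX₂ ^ 2)) :
    (ωX₁, α₁, τX₁, ωY₁, τY₁, lam₁, θ₁) = (ωX₂, α₂, τX₂, ωY₂, τY₂, lam₂, θ₂) :=
  stmt_6_general J β ωX₁ α₁ τX₁ τY₁ ωY₁ lam₁ θ₁ ωX₂ α₂ τX₂ τY₂ ωY₂ lam₂ θ₂ hτX₁ hτY₁ hτY₂ hα himg
end

section
/- If β | φ ~ N(0, φ²) and φ ~ Cauchy⁺(0,1), then the marginal density of β satisfies p(β) ~ C/β² as |β| → ∞ for some constant C > 0; in particular p has heavier tails than any Gaussian. -/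
/-!
Substituting `φ = β ψ` turns `β² p(β)` into `∫₀^∞ c e^{-1/(2ψ²)} ψ⁻¹ · β²/(1 + β²ψ²) dψ` with
`c = 2/(π√(2π))`. As `β → ∞` the last factor increases to `ψ⁻²`, so by dominated convergence
`β² p(β) → c ∫₀^∞ e^{-1/(2ψ²)} ψ⁻³ dψ = c`, the last integral being `∫₀^∞ e^{-u}du` after
`u = 1/(2ψ²)`. A quadratic tail then beats every Gaussian `e^{-β²/(2s)}`.
-/

open Filter Topology MeasureTheory Real Set

lemma exp_neg_div_sq_div_pow_three_eq_rpow {a x : ℝ} (hx : 0 < x) :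
    exp (-a / x ^ 2) / x ^ 3 = x ^ ((-2 : ℝ) - 1) • exp (-a * x ^ (-2 : ℝ)) := by
  rw [smul_eq_mul, show (-2 : ℝ) - 1 = -3 by norm_num, rpow_neg hx.le, rpow_neg hx.le]
  norm_cast
  rw [div_eq_mul_inv, neg_div, div_eq_mul_inv, neg_mul, mul_comm]

theorem integrableOn_exp_neg_div_sq_div_pow_three {a : ℝ} (ha : 0 < a) :
    IntegrableOn (fun x => exp (-a / x ^ 2) / x ^ 3) (Ioi 0) := by
  have h := (integrableOn_Ioi_comp_rpow_iff' (fun u => exp (-a * u)) (p := -2) (by norm_num)).2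
    (exp_neg_integrableOn_Ioi 0 ha)
  exact h.congr_fun (fun _ hx => (exp_neg_div_sq_div_pow_three_eq_rpow hx).symm) measurableSet_Ioi

theorem integral_exp_neg_div_sq_div_pow_three {a : ℝ} (ha : 0 < a) :
    ∫ x in Ioi 0, exp (-a / x ^ 2) / x ^ 3 = 1 / (2 * a) := by
  have h := integral_comp_rpow_Ioi (fun u => exp (-a * u)) (p := -2) (by norm_num)
  rw [integral_exp_mul_Ioi (by linarith) 0] at h
  simp only [smul_eq_mul, mul_assoc, integral_const_mul, abs_neg, abs_two] at h
  rw [setIntegral_congr_fun measurableSet_Ioi (fun _ hx => exp_neg_div_sq_div_pow_three_eq_rpow hx)]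
  simp only [smul_eq_mul, neg_mul] at h ⊢
  rw [mul_zero, neg_zero, exp_zero] at h
  field_simp at h ⊢
  linarith

lemma sq_div_one_add_sq_mul_sq_le (b : ℝ) {ψ : ℝ} (hψ : ψ ≠ 0) :
    b ^ 2 / (1 + b ^ 2 * ψ ^ 2) ≤ 1 / ψ ^ 2 := by
  rw [div_le_div_iff₀ (by positivity) (by positivity)]
  nlinarith [sq_nonneg b]

lemma tendsto_sq_div_one_add_sq_mul_sq {ψ : ℝ} (hψ : ψ ≠ 0) :
    Tendsto (fun b : ℝ => b ^ 2 / (1 + b ^ 2 * ψ ^ 2)) atTop (𝓝 (1 / ψ ^ 2)) := by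
  have h : Tendsto (fun b : ℝ => 1 / ((b ^ 2)⁻¹ + ψ ^ 2)) atTop (𝓝 (1 / (0 + ψ ^ 2))) :=
    tendsto_const_nhds.div ((tendsto_pow_atTop two_ne_zero).inv_tendsto_atTop.add_const _)
      (by positivity)
  rw [zero_add] at h
  refine h.congr' ?_
  filter_upwards [eventually_ne_atTop 0] with b hb
  field_simp

lemma tendsto_exp_neg_sq_div_mul_sq {s : ℝ} (hs : 0 < s) :
    Tendsto (fun β => exp (-β ^ 2 / (2 * s)) * β ^ 2) atTop (𝓝 0) := by
  have h := ((tendsto_pow_mul_exp_neg_atTop_nhds_zero 1).comp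
    ((tendsto_pow_atTop two_ne_zero).atTop_div_const (by positivity : 0 < 2 * s))).const_mul (2 * s)
  rw [mul_zero] at h
  refine h.congr fun β => ?_
  simp only [Function.comp_apply, pow_one, neg_div]
  field_simp

theorem tendsto_exp_neg_sq_div_div_of_tendsto_mul_sq {f : ℝ → ℝ} {C s : ℝ} (hC : C ≠ 0)
    (hf : Tendsto (fun β => f β * β ^ 2) atTop (𝓝 C)) (hs : 0 < s) :
    Tendsto (fun β => exp (-β ^ 2 / (2 * s)) / f β) atTop (𝓝 0) := by
  have h := (tendsto_exp_neg_sq_div_mul_sq hs).mul (hf.inv₀ hC)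
  rw [zero_mul] at h
  refine h.congr' ?_
  filter_upwards [eventually_ne_atTop 0] with β hβ
  rw [mul_inv, div_eq_mul_inv]
  field_simp

noncomputable def horseshoeMarginal (β : ℝ) : ℝ :=
  ∫ φ in Ioi (0 : ℝ),
    (1 / (φ * √(2 * π))) * exp (-β ^ 2 / (2 * φ ^ 2)) * (2 / (π * (1 + φ ^ 2)))

noncomputable def horseshoeTailConst : ℝ := 2 / (π * √(2 * π))

lemma horseshoeTailConst_pos : 0 < horseshoeTailConst := by
  unfold horseshoeTailConst; have := pi_pos; positivity

lemma horseshoeMarginal_neg (β : ℝ) : horseshoeMarginal (-β) = horseshoeMarginal β := by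
  simp only [horseshoeMarginal, neg_sq]

theorem horseshoeMarginal_mul_sq {b : ℝ} (hb : 0 < b) :
    horseshoeMarginal b * b ^ 2 = ∫ ψ in Ioi 0,
      horseshoeTailConst * (exp (-1 / (2 * ψ ^ 2)) / ψ) * (b ^ 2 / (1 + b ^ 2 * ψ ^ 2)) := by
  have h := integral_comp_mul_left_Ioi (fun φ => (1 / (φ * √(2 * π))) *
    exp (-b ^ 2 / (2 * φ ^ 2)) * (2 / (π * (1 + φ ^ 2)))) 0 hb
  rw [mul_zero, smul_eq_mul] at h
  rw [horseshoeMarginal, ← mul_inv_cancel_left₀ hb.ne' (∫ φ in Ioi (0 : ℝ), _), ← h,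
    ← integral_const_mul, ← integral_mul_const]
  refine setIntegral_congr_fun measurableSet_Ioi fun ψ (hψ : 0 < ψ) => ?_
  have hexponent : -b ^ 2 / (2 * (b * ψ) ^ 2) = -1 / (2 * ψ ^ 2) := by field_simp
  rw [hexponent, horseshoeTailConst]
  have := pi_pos
  field_simp

theorem tendsto_horseshoeMarginal_mul_sq_atTop :
    Tendsto (fun β => horseshoeMarginal β * β ^ 2) atTop (𝓝 horseshoeTailConst) := by
  set g : ℝ → ℝ := fun ψ => horseshoeTailConst * (exp (-1 / (2 * ψ ^ 2)) / ψ) * (1 / ψ ^ 2)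
  have hg : g = fun ψ => horseshoeTailConst * (exp (-(1 / 2) / ψ ^ 2) / ψ ^ 3) := by
    ext ψ; simp only [g]; ring_nf
  have hg_int : IntegrableOn g (Ioi 0) := by
    rw [hg]; exact (integrableOn_exp_neg_div_sq_div_pow_three (by norm_num)).const_mul _
  have hg_integral : ∫ ψ in Ioi 0, g ψ = horseshoeTailConst := by
    rw [hg, integral_const_mul, integral_exp_neg_div_sq_div_pow_three (by norm_num)]
    norm_num
  rw [← hg_integral]
  refine (tendsto_integral_filter_of_dominated_convergence (F := fun b ψ =>
      horseshoeTailConst * (exp (-1 / (2 * ψ ^ 2)) / ψ) * (b ^ 2 / (1 + b ^ 2 * ψ ^ 2))) g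
    (Eventually.of_forall fun _ => by fun_prop) (Eventually.of_forall fun b => ?_) hg_int ?_).congr' ?_
  · filter_upwards [self_mem_ae_restrict measurableSet_Ioi] with ψ (hψ : 0 < ψ)
    have := horseshoeTailConst_pos
    rw [norm_of_nonneg (by positivity)]
    exact mul_le_mul_of_nonneg_left (sq_div_one_add_sq_mul_sq_le b hψ.ne') (by positivity)
  · filter_upwards [self_mem_ae_restrict measurableSet_Ioi] with ψ (hψ : 0 < ψ)
    exact (tendsto_sq_div_one_add_sq_mul_sq hψ.ne').const_mul _
  · filter_upwards [eventually_gt_atTop 0] with b hb using (horseshoeMarginal_mul_sq hb).symm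

theorem tendsto_horseshoeMarginal_mul_sq_atBot :
    Tendsto (fun β => horseshoeMarginal β * β ^ 2) atBot (𝓝 horseshoeTailConst) := by
  have h := tendsto_horseshoeMarginal_mul_sq_atTop.comp tendsto_neg_atBot_atTop
  simpa only [Function.comp_def, horseshoeMarginal_neg, neg_sq] using h

/-- If `β | φ ~ N(0, φ²)` and `φ ~ Cauchy⁺(0,1)`, the marginal horseshoe density
`p(β) = ∫₀^∞ (φ√(2π))⁻¹ exp(−β²/(2φ²)) · 2/(π(1+φ²)) dφ` satisfies `p(β) ~ C/β²` as
`|β| → ∞` for some `C > 0`; in particular `p` has heavier tails than any Gaussian. -/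
theorem stmt_10 :
    ∃ C > (0 : ℝ),
      Tendsto
        (fun β : ℝ =>
          (∫ φ in Set.Ioi (0 : ℝ),
            (1 / (φ * Real.sqrt (2 * Real.pi))) * Real.exp (-β ^ 2 / (2 * φ ^ 2))
              * (2 / (Real.pi * (1 + φ ^ 2)))) * β ^ 2)
        atTop (𝓝 C) ∧
      Tendsto
        (fun β : ℝ =>
          (∫ φ in Set.Ioi (0 : ℝ),
            (1 / (φ * Real.sqrt (2 * Real.pi))) * Real.exp (-β ^ 2 / (2 * φ ^ 2))
              * (2 / (Real.pi * (1 + φ ^ 2)))) * β ^ 2)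
        atBot (𝓝 C) ∧
      ∀ s > (0 : ℝ),
        Tendsto
          (fun β : ℝ =>
            Real.exp (-β ^ 2 / (2 * s)) /
              ∫ φ in Set.Ioi (0 : ℝ),
                (1 / (φ * Real.sqrt (2 * Real.pi))) * Real.exp (-β ^ 2 / (2 * φ ^ 2))
                  * (2 / (Real.pi * (1 + φ ^ 2))))
          atTop (𝓝 0) :=
  ⟨horseshoeTailConst, horseshoeTailConst_pos, tendsto_horseshoeMarginal_mul_sq_atTop,
    tendsto_horseshoeMarginal_mul_sq_atBot, fun _ hs =>
      tendsto_exp_neg_sq_div_div_of_tendsto_mul_sq horseshoeTailConst_pos.ne'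
        tendsto_horseshoeMarginal_mul_sq_atTop hs⟩
end

section
/- If φ | γ ~ Cauchy⁺(0, γ), i.e. φ = γ·T with T ~ Cauchy⁺(0,1) independent of γ, and γ ~ Cauchy⁺(0,1), then the marginal density of φ is h(φ) = (4/π²)·log(φ)/(φ² − 1) for φ ≠ 1 (extended by continuity with value 2/π² at φ = 1). -/
/-!
After clearing denominators the integrand is `(4/π²) · γ / ((γ² + φ²)(γ² + 1))`. For `φ ≠ 1`
partial fractions give the antiderivative `log ((γ² + φ²)/(γ² + 1)) / (2(1 - φ²))`, which vanishes
at infinity and equals `log φ / (1 - φ²)` at `0`; for `φ = 1` the antiderivative is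
`-1 / (2(γ² + 1))`.
-/

open MeasureTheory Filter Real Topology

lemma hasDerivAt_log_sq_add {a : ℝ} (ha : 0 < a) (x : ℝ) :
    HasDerivAt (fun x : ℝ => log (x ^ 2 + a)) (2 * x / (x ^ 2 + a)) x := by
  have hsq : HasDerivAt (fun x : ℝ => x ^ 2 + a) (2 * x) x := by
    simpa using (hasDerivAt_pow 2 x).add_const a
  exact hsq.log (by positivity)

lemma tendsto_log_sq_add_sub_log_sq_add (a b : ℝ) :
    Tendsto (fun x : ℝ => log (x ^ 2 + a) - log (x ^ 2 + b)) atTop (𝓝 0) := by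
  have hsq : Tendsto (fun x : ℝ => x ^ 2) atTop atTop := tendsto_pow_atTop two_ne_zero
  have hA := tendsto_atTop_add_const_right _ a hsq
  have hB := tendsto_atTop_add_const_right _ b hsq
  have hratio : Tendsto (fun x : ℝ => 1 + (a - b) / (x ^ 2 + b)) atTop (𝓝 1) := by
    simpa using (hB.const_div_atTop (a - b)).const_add 1
  have hlog_div : (fun x : ℝ => log (1 + (a - b) / (x ^ 2 + b)))
      =ᶠ[atTop] fun x => log (x ^ 2 + a) - log (x ^ 2 + b) := by
    filter_upwards [hA.eventually_ne_atTop 0, hB.eventually_ne_atTop 0] with x hxa hxb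
    rw [← log_div hxa hxb]
    congr 1
    field_simp
    ring
  simpa using ((continuousAt_log one_ne_zero).tendsto.comp hratio).congr' hlog_div

theorem integral_Ioi_div_sq_add_mul_sq_add {a b : ℝ} (ha : 0 < a) (hb : 0 < b) (hab : a ≠ b) :
    ∫ x in Set.Ioi (0 : ℝ), x / ((x ^ 2 + a) * (x ^ 2 + b)) = (log a - log b) / (2 * (a - b)) := by
  have hba : b - a ≠ 0 := sub_ne_zero.2 hab.symm
  have hFTC := integral_Ioi_of_hasDerivAt_of_nonneg' (a := 0) (l := 0)
    (g' := fun x => x / ((x ^ 2 + a) * (x ^ 2 + b)))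
    (g := fun x => (log (x ^ 2 + a) - log (x ^ 2 + b)) / (2 * (b - a)))
    (fun x _ => by
      refine (((hasDerivAt_log_sq_add ha x).sub (hasDerivAt_log_sq_add hb x)).div_const
        (2 * (b - a))).congr_deriv ?_
      have : x ^ 2 + a ≠ 0 := by positivity
      have : x ^ 2 + b ≠ 0 := by positivity
      field_simp
      ring)
    (fun x (hx : 0 < x) => by positivity)
    (by simpa using (tendsto_log_sq_add_sub_log_sq_add a b).div_const (2 * (b - a)))
  rw [hFTC, zero_pow two_ne_zero, zero_add, zero_add, ← neg_sub a b]
  field_simp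
  ring

theorem integral_Ioi_div_sq_add_sq {a : ℝ} (ha : 0 < a) :
    ∫ x in Set.Ioi (0 : ℝ), x / (x ^ 2 + a) ^ 2 = 1 / (2 * a) := by
  have hsq : Tendsto (fun x : ℝ => x ^ 2 + a) atTop atTop :=
    tendsto_atTop_add_const_right _ a (tendsto_pow_atTop two_ne_zero)
  have hFTC := integral_Ioi_of_hasDerivAt_of_nonneg' (a := 0) (l := 0)
    (g' := fun x => x / (x ^ 2 + a) ^ 2)
    (g := fun x => -(x ^ 2 + a)⁻¹ / 2)
    (fun x _ => by
      have hderiv : HasDerivAt (fun x : ℝ => x ^ 2 + a) (2 * x) x := by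
        simpa using (hasDerivAt_pow 2 x).add_const a
      have hne : x ^ 2 + a ≠ 0 := by positivity
      refine ((hderiv.inv hne).neg.div_const 2).congr_deriv ?_
      field_simp)
    (fun x (hx : 0 < x) => by positivity)
    (by simpa using (hsq.inv_tendsto_atTop.neg).div_const 2)
  rw [hFTC, zero_pow two_ne_zero, zero_add]
  ring

lemma halfCauchy_product_integrand_eq (φ : ℝ) {γ : ℝ} (hγ : 0 < γ) :
    (1 / γ) * (2 / (π * (1 + (φ / γ) ^ 2))) * (2 / (π * (1 + γ ^ 2)))
      = 4 / π ^ 2 * (γ / ((γ ^ 2 + φ ^ 2) * (γ ^ 2 + 1))) := by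
  field_simp
  ring

lemma integral_halfCauchy_product (φ : ℝ) :
    ∫ γ in Set.Ioi (0 : ℝ), (1 / γ) * (2 / (π * (1 + (φ / γ) ^ 2))) * (2 / (π * (1 + γ ^ 2)))
      = 4 / π ^ 2 * ∫ γ in Set.Ioi (0 : ℝ), γ / ((γ ^ 2 + φ ^ 2) * (γ ^ 2 + 1)) := by
  rw [← integral_const_mul]
  exact setIntegral_congr_fun measurableSet_Ioi fun γ hγ => halfCauchy_product_integrand_eq φ hγ

/-- If `φ = γ·T` with `T, γ` independent standard half-Cauchy, the marginal density of
`φ`, computed by the product density formula `h(φ) = ∫₀^∞ γ⁻¹ f(φ/γ) f(γ) dγ` with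
`f(x) = 2/(π(1+x²))`, equals `(4/π²)·log(φ)/(φ² − 1)` for `φ ≠ 1`, and `2/π²` at
`φ = 1`. -/
theorem stmt_13 :
    (∀ φ : ℝ, 0 < φ → φ ≠ 1 →
      ∫ γ in Set.Ioi (0 : ℝ),
          (1 / γ) * (2 / (Real.pi * (1 + (φ / γ) ^ 2))) * (2 / (Real.pi * (1 + γ ^ 2)))
        = (4 / Real.pi ^ 2) * Real.log φ / (φ ^ 2 - 1)) ∧
    ∫ γ in Set.Ioi (0 : ℝ),
        (1 / γ) * (2 / (Real.pi * (1 + ((1 : ℝ) / γ) ^ 2))) * (2 / (Real.pi * (1 + γ ^ 2)))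
      = 2 / Real.pi ^ 2 := by
  refine ⟨fun φ hφ hφ1 => ?_, ?_⟩
  · have hφ2 : φ ^ 2 ≠ 1 := (pow_eq_one_iff_of_nonneg hφ.le two_ne_zero).not.mpr hφ1
    rw [integral_halfCauchy_product, integral_Ioi_div_sq_add_mul_sq_add (by positivity) one_pos hφ2,
      log_pow, log_one]
    have : φ ^ 2 - 1 ≠ 0 := sub_ne_zero.2 hφ2
    field_simp
    ring
  · rw [integral_halfCauchy_product]
    simp only [one_pow, ← sq]
    rw [integral_Ioi_div_sq_add_sq one_pos]
    ring
end

section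
/- Suppose more than half of the total weight is on valid instruments: the ratios r_j = β_{YZ_j}/β_{XZ_j} satisfy r_j = θ for a set S with Σ_{j∈S} w_j > 1/2 (w_j ≥ 0, Σ w_j = 1). Then the weighted median of {r_j} with weights {w_j} equals θ. -/
/-- If more than half of the total weight lies on valid instruments — i.e. the ratios
`r_j` equal `θ` on a set `S` of weight `> 1/2` (with `w_j ≥ 0`, `Σ w_j = 1`) — then any
weighted median `m` of `{r_j}` (a value with at least half the weight on `{r_j ≤ m}` and
on `{r_j ≥ m}`) equals `θ`. -/
theorem stmt_19 (J : ℕ) (θ : ℝ) (r w : Fin J → ℝ) (S : Finset (Fin J))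
    (hS : ∀ j ∈ S, r j = θ) (hmaj : (1 / 2 : ℝ) < ∑ j ∈ S, w j)
    (hw : ∀ j, 0 ≤ w j) (hsum : ∑ j, w j = 1)
    (m : ℝ)
    (h1 : (1 / 2 : ℝ) ≤ ∑ j ∈ Finset.univ.filter (fun j => r j ≤ m), w j)
    (h2 : (1 / 2 : ℝ) ≤ ∑ j ∈ Finset.univ.filter (fun j => m ≤ r j), w j) :
    m = θ := by
  by_contra hne
  have key : ∀ (A : Finset (Fin J)), Disjoint S A → ∑ j ∈ A, w j < 1 / 2 := by
    intro A hd
    have h := Finset.sum_le_sum_of_subset_of_nonneg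
      (Finset.subset_univ (S ∪ A)) (fun j _ _ => hw j)
    rw [Finset.sum_union hd, hsum] at h
    linarith
  rcases lt_or_gt_of_ne hne with h | h
  · have hd : Disjoint S (Finset.univ.filter (fun j => r j ≤ m)) := by
      rw [Finset.disjoint_left]
      intro j hj hj'
      have := (Finset.mem_filter.mp hj').2
      rw [hS j hj] at this; linarith
    exact absurd h1 (not_le.mpr (key _ hd))
  · have hd : Disjoint S (Finset.univ.filter (fun j => m ≤ r j)) := by
      rw [Finset.disjoint_left]
      intro j hj hj'
      have := (Finset.mem_filter.mp hj').2
      rw [hS j hj] at this; linarith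
    exact absurd h2 (not_le.mpr (key _ hd))
end
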